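/- If a, b, c are functions each either meromorphic on ℂ or identically ∞ (i.e., holomorphic maps from ℂ to the Riemann sphere), and there exists ε > 0 such that σ(a(z),b(z))·σ(a(z),c(z))·σ(b(z),c(z)) ≥ ε for all z ∈ ℂ (where σ is the spherical metric on the Riemann sphere), then a, b and c are all constant. -/

import Mathlib

/-! Write `a = f₁ / g₁`, `b = f₂ / g₂`, `c = f₃ / g₃` with entire `fᵢ, gᵢ` without common zeros
and put `Wᵢⱼ = fᵢ gⱼ - fⱼ gᵢ`. The chordal distance of `a` and `b` is
`2 |W₁₂| / (‖(f₁, g₁)‖ ‖(f₂, g₂)‖)`. Every spherical distance is at most `π`, and `(2/π) σ ≤ χ`,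
so the separation hypothesis gives `|Wᵢⱼ| ≥ δ ‖(fᵢ, gᵢ)‖ ‖(fⱼ, gⱼ)‖` for some `δ > 0`.
Then `φ = W₂₃ / (W₁₂ W₁₃)` is entire and zero-free, and `φ f₁ g₁`, `φ g₁²` are bounded by
`4 / δ²`, hence constant by Liouville; their quotient is `a`. -/
open Complex OnePoint Filter Topology Metric

/-- Chordal metric on the Riemann sphere of diameter 2. -/
noncomputable def chordal : OnePoint ℂ → OnePoint ℂ → ℝ
  | (z : ℂ), (w : ℂ) => 2 * ‖z - w‖ /
      (Real.sqrt (1 + ‖z‖ ^ 2) * Real.sqrt (1 + ‖w‖ ^ 2))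
  | (z : ℂ), ∞ => 2 / Real.sqrt (1 + ‖z‖ ^ 2)
  | ∞, (w : ℂ) => 2 / Real.sqrt (1 + ‖w‖ ^ 2)
  | ∞, ∞ => 0

/-- Spherical (great-circle) metric on the Riemann sphere of diameter 2. -/
noncomputable def sphDist (x y : OnePoint ℂ) : ℝ := 2 * Real.arcsin (chordal x y / 2)

/-- Value of the quotient `p/q` on the Riemann sphere. -/
noncomputable def toSph (p q : ℂ) : OnePoint ℂ :=
  if q = 0 then ∞ else ((p / q : ℂ) : OnePoint ℂ)

/-- A sphere-valued function is meromorphic on `U` (possibly `≡ ∞`) iff it is a quotient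
of two holomorphic functions without common zeros. -/
def MeromorphicOnSph (U : Set ℂ) (a : ℂ → OnePoint ℂ) : Prop :=
  ∃ f g : ℂ → ℂ, DifferentiableOn ℂ f U ∧ DifferentiableOn ℂ g U ∧
    (∀ z ∈ U, ¬(f z = 0 ∧ g z = 0)) ∧ ∀ z ∈ U, a z = toSph (f z) (g z)

open Real

noncomputable def homNorm (p q : ℂ) : ℝ := √(‖p‖ ^ 2 + ‖q‖ ^ 2)

lemma homNorm_pos {p q : ℂ} (h : ¬(p = 0 ∧ q = 0)) : 0 < homNorm p q := by
  rw [not_and_or] at h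
  apply sqrt_pos.mpr
  rcases h with h | h
  · have := norm_pos_iff.mpr h; positivity
  · have := norm_pos_iff.mpr h; positivity

lemma sq_homNorm (p q : ℂ) : homNorm p q ^ 2 = ‖p‖ ^ 2 + ‖q‖ ^ 2 :=
  sq_sqrt (by positivity)

lemma homNorm_div (p : ℂ) {q : ℂ} (hq : q ≠ 0) : √(1 + ‖p / q‖ ^ 2) = homNorm p q / ‖q‖ := by
  have hq' : 0 < ‖q‖ := norm_pos_iff.mpr hq
  rw [homNorm, ← sqrt_sq hq'.le, ← sqrt_div (by positivity), sqrt_sq hq'.le,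
    norm_div]
  congr 1
  field_simp
  ring

lemma norm_cross_le (p q r s : ℂ) : ‖p * s - r * q‖ ≤ homNorm p q * homNorm r s := by
  rw [homNorm, homNorm, ← sqrt_mul (by positivity)]
  apply le_sqrt_of_sq_le
  calc ‖p * s - r * q‖ ^ 2 ≤ (‖p‖ * ‖s‖ + ‖r‖ * ‖q‖) ^ 2 := by
        gcongr
        exact (norm_sub_le _ _).trans_eq (by rw [norm_mul, norm_mul])
    _ ≤ (‖p‖ ^ 2 + ‖q‖ ^ 2) * (‖r‖ ^ 2 + ‖s‖ ^ 2) := by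
        nlinarith [sq_nonneg (‖p‖ * ‖r‖ - ‖q‖ * ‖s‖)]

lemma homNorm_zero_right (p : ℂ) : homNorm p 0 = ‖p‖ := by
  simp [homNorm]

lemma chordal_toSph {p q r s : ℂ} (h₁ : ¬(p = 0 ∧ q = 0)) (h₂ : ¬(r = 0 ∧ s = 0)) :
    chordal (toSph p q) (toSph r s) = 2 * ‖p * s - r * q‖ / (homNorm p q * homNorm r s) := by
  have hA := homNorm_pos h₁
  have hB := homNorm_pos h₂
  by_cases hq : q = 0 <;> by_cases hs : s = 0
  · simp [toSph, chordal, hq, hs]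
  · have hp : ‖p‖ ≠ 0 := by simp_all
    simp only [toSph, chordal, hq, hs, if_true, if_false, homNorm_div r hs, homNorm_zero_right]
    simp only [mul_zero, sub_zero, norm_mul]
    field_simp
  · have hr : ‖r‖ ≠ 0 := by simp_all
    simp only [toSph, chordal, hq, hs, if_true, if_false, homNorm_div p hq, homNorm_zero_right]
    simp only [mul_zero, zero_sub, norm_neg, norm_mul]
    field_simp
  · simp only [toSph, chordal, hq, hs, if_false, homNorm_div p hq, homNorm_div r hs]
    rw [div_sub_div _ _ hq hs, norm_div, norm_mul]
    have := norm_pos_iff.mpr hq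
    have := norm_pos_iff.mpr hs
    field_simp

lemma exists_toSph_eq (x : OnePoint ℂ) : ∃ p q : ℂ, ¬(p = 0 ∧ q = 0) ∧ toSph p q = x := by
  induction x using OnePoint.rec with
  | infty => exact ⟨1, 0, by simp, by simp [toSph]⟩
  | coe z => exact ⟨z, 1, by simp, by simp [toSph]⟩

lemma chordal_comm (x y : OnePoint ℂ) : chordal x y = chordal y x := by
  induction x using OnePoint.rec <;> induction y using OnePoint.rec <;>
    simp only [chordal, norm_sub_rev, mul_comm]

lemma chordal_nonneg (x y : OnePoint ℂ) : 0 ≤ chordal x y := by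
  induction x using OnePoint.rec <;> induction y using OnePoint.rec <;>
    simp only [chordal, le_refl] <;> positivity

lemma chordal_le_two (x y : OnePoint ℂ) : chordal x y ≤ 2 := by
  obtain ⟨p, q, h₁, rfl⟩ := exists_toSph_eq x
  obtain ⟨r, s, h₂, rfl⟩ := exists_toSph_eq y
  rw [chordal_toSph h₁ h₂, div_le_iff₀ (mul_pos (homNorm_pos h₁) (homNorm_pos h₂))]
  linarith [norm_cross_le p q r s]

lemma sphDist_comm (x y : OnePoint ℂ) : sphDist x y = sphDist y x := by
  rw [sphDist, sphDist, chordal_comm]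

lemma sphDist_nonneg (x y : OnePoint ℂ) : 0 ≤ sphDist x y := by
  have := arcsin_nonneg.mpr (div_nonneg (chordal_nonneg x y) zero_le_two)
  rw [sphDist]; positivity

lemma sphDist_le_pi (x y : OnePoint ℂ) : sphDist x y ≤ π := by
  rw [sphDist]; linarith [arcsin_le_pi_div_two (chordal x y / 2)]

lemma two_div_pi_mul_sphDist_le_chordal (x y : OnePoint ℂ) :
    2 / π * sphDist x y ≤ chordal x y := by
  have ht₀ : 0 ≤ chordal x y / 2 := div_nonneg (chordal_nonneg x y) zero_le_two
  have ht₁ : chordal x y / 2 ≤ 1 := by linarith [chordal_le_two x y]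
  have := mul_le_sin (arcsin_nonneg.mpr ht₀) (arcsin_le_pi_div_two _)
  rw [sin_arcsin (by linarith) ht₁] at this
  rw [sphDist]; linarith

lemma chordal_lower_of_sphDist_mul {x y w : OnePoint ℂ} {ε : ℝ}
    (h : ε ≤ sphDist x y * sphDist x w * sphDist y w) : 2 * ε / π ^ 3 ≤ chordal x y := by
  have hπ := pi_pos
  have hxy : ε ≤ sphDist x y * π ^ 2 := by
    have := mul_le_mul (sphDist_le_pi x w) (sphDist_le_pi y w) (sphDist_nonneg y w) hπ.le
    nlinarith [sphDist_nonneg x y]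
  calc 2 * ε / π ^ 3 ≤ 2 / π * sphDist x y := by
        rw [div_le_iff₀ (by positivity)]
        have : 2 / π * sphDist x y * π ^ 3 = 2 * (sphDist x y * π ^ 2) := by field_simp
        linarith
    _ ≤ chordal x y := two_div_pi_mul_sphDist_le_chordal x y

lemma toSph_eq_of_mul_eq {p q r s u v : ℂ} (hu : u ≠ 0) (hv : v ≠ 0)
    (h₁ : u * (p * q) = v * (r * s)) (h₂ : u * q ^ 2 = v * s ^ 2) : toSph p q = toSph r s := by
  by_cases hq : q = 0
  · have hs : s = 0 := by simpa [hq, hv] using h₂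
    simp [toSph, hq, hs]
  · have hs : s ≠ 0 := by rintro rfl; simp_all
    simp only [toSph, if_neg hq, if_neg hs]
    congr 1
    calc p / q = u * (p * q) / (u * q ^ 2) := by field_simp
      _ = r / s := by rw [h₁, h₂]; field_simp

lemma toSph_const_of_bounded {f g φ : ℂ → ℂ} (hf : Differentiable ℂ f) (hg : Differentiable ℂ g)
    (hφ : Differentiable ℂ φ) (hφ₀ : ∀ z, φ z ≠ 0) {C : ℝ}
    (hC : ∀ z, ‖φ z‖ * (‖f z‖ ^ 2 + ‖g z‖ ^ 2) ≤ C) (z w : ℂ) :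
    toSph (f z) (g z) = toSph (f w) (g w) := by
  have liouville : ∀ h : ℂ → ℂ, Differentiable ℂ h → (∀ z, ‖h z‖ ≤ C) → h z = h w :=
    fun h hh hb => hh.apply_eq_apply_of_bounded
      (isBounded_iff_forall_norm_le.mpr ⟨C, by rintro _ ⟨z, rfl⟩; exact hb z⟩) z w
  refine toSph_eq_of_mul_eq (hφ₀ z) (hφ₀ w)
    (liouville (fun z => φ z * (f z * g z)) (by fun_prop) fun z => ?_)
    (liouville (fun z => φ z * g z ^ 2) (by fun_prop) fun z => ?_)
  · refine le_trans ?_ (hC z)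
    rw [norm_mul, norm_mul]
    gcongr
    nlinarith [sq_nonneg (‖f z‖ - ‖g z‖)]
  · refine le_trans ?_ (hC z)
    rw [norm_mul, norm_pow]
    gcongr
    nlinarith [sq_nonneg ‖f z‖]

lemma MeromorphicOnSph.exists_eq_toSph {a : ℂ → OnePoint ℂ} (ha : MeromorphicOnSph Set.univ a) :
    ∃ f g : ℂ → ℂ, Differentiable ℂ f ∧ Differentiable ℂ g ∧ (∀ z, ¬(f z = 0 ∧ g z = 0)) ∧
      a = fun z => toSph (f z) (g z) := by
  obtain ⟨f, g, hf, hg, hfg, ha⟩ := ha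
  exact ⟨f, g, differentiableOn_univ.mp hf, differentiableOn_univ.mp hg,
    fun z => hfg z trivial, funext fun z => ha z trivial⟩

lemma mul_homNorm_le_of_le_chordal {p q r s : ℂ} (h₁ : ¬(p = 0 ∧ q = 0))
    (h₂ : ¬(r = 0 ∧ s = 0)) {δ : ℝ} (h : δ ≤ chordal (toSph p q) (toSph r s)) :
    δ * (homNorm p q * homNorm r s) ≤ 2 * ‖p * s - r * q‖ := by
  rwa [chordal_toSph h₁ h₂, le_div_iff₀ (mul_pos (homNorm_pos h₁) (homNorm_pos h₂))] at h

theorem apply_eq_apply_of_le_chordal {a b c : ℂ → OnePoint ℂ} (ha : MeromorphicOnSph Set.univ a)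
    (hb : MeromorphicOnSph Set.univ b) (hc : MeromorphicOnSph Set.univ c) {δ : ℝ} (hδ : 0 < δ)
    (hab : ∀ z, δ ≤ chordal (a z) (b z)) (hac : ∀ z, δ ≤ chordal (a z) (c z))
    (hbc : ∀ z, δ ≤ chordal (b z) (c z)) (z w : ℂ) : a z = a w := by
  obtain ⟨f₁, g₁, hf₁, hg₁, hn₁, rfl⟩ := ha.exists_eq_toSph
  obtain ⟨f₂, g₂, hf₂, hg₂, hn₂, rfl⟩ := hb.exists_eq_toSph
  obtain ⟨f₃, g₃, hf₃, hg₃, hn₃, rfl⟩ := hc.exists_eq_toSph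
  set W₁₂ : ℂ → ℂ := fun z => f₁ z * g₂ z - f₂ z * g₁ z
  set W₁₃ : ℂ → ℂ := fun z => f₁ z * g₃ z - f₃ z * g₁ z
  set W₂₃ : ℂ → ℂ := fun z => f₂ z * g₃ z - f₃ z * g₂ z
  set S : (ℂ → ℂ) → (ℂ → ℂ) → ℂ → ℝ := fun f g z => homNorm (f z) (g z)
  have hS : ∀ z, 0 < S f₁ g₁ z ∧ 0 < S f₂ g₂ z ∧ 0 < S f₃ g₃ z := fun z =>
    ⟨homNorm_pos (hn₁ z), homNorm_pos (hn₂ z), homNorm_pos (hn₃ z)⟩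
  have k₁₂ : ∀ z, δ * (S f₁ g₁ z * S f₂ g₂ z) ≤ 2 * ‖W₁₂ z‖ := fun z =>
    mul_homNorm_le_of_le_chordal (hn₁ z) (hn₂ z) (hab z)
  have k₁₃ : ∀ z, δ * (S f₁ g₁ z * S f₃ g₃ z) ≤ 2 * ‖W₁₃ z‖ := fun z =>
    mul_homNorm_le_of_le_chordal (hn₁ z) (hn₃ z) (hac z)
  have k₂₃ : ∀ z, δ * (S f₂ g₂ z * S f₃ g₃ z) ≤ 2 * ‖W₂₃ z‖ := fun z =>
    mul_homNorm_le_of_le_chordal (hn₂ z) (hn₃ z) (hbc z)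
  have hW : ∀ z, 0 < ‖W₁₂ z‖ ∧ 0 < ‖W₁₃ z‖ ∧ 0 < ‖W₂₃ z‖ := by
    intro z
    obtain ⟨h₁, h₂, h₃⟩ := hS z
    refine ⟨?_, ?_, ?_⟩
    · linarith [k₁₂ z, mul_pos hδ (mul_pos h₁ h₂)]
    · linarith [k₁₃ z, mul_pos hδ (mul_pos h₁ h₃)]
    · linarith [k₂₃ z, mul_pos hδ (mul_pos h₂ h₃)]
  have hW₀ : ∀ z, W₁₂ z * W₁₃ z ≠ 0 := fun z =>
    mul_ne_zero (norm_pos_iff.mp (hW z).1) (norm_pos_iff.mp (hW z).2.1)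
  refine toSph_const_of_bounded hf₁ hg₁ (φ := fun z => W₂₃ z / (W₁₂ z * W₁₃ z))
    (by fun_prop (disch := exact hW₀ _)) (fun z => div_ne_zero (norm_pos_iff.mp (hW z).2.2) (hW₀ z))
    (C := 4 / δ ^ 2) (fun z => ?_) z w
  obtain ⟨h₁, h₂, h₃⟩ := hS z
  have u₂₃ : ‖W₂₃ z‖ ≤ S f₂ g₂ z * S f₃ g₃ z := norm_cross_le _ _ _ _
  rw [← sq_homNorm, norm_div, norm_mul, div_mul_eq_mul_div,
    div_le_div_iff₀ (mul_pos (hW z).1 (hW z).2.1) (by positivity)]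
  calc ‖W₂₃ z‖ * S f₁ g₁ z ^ 2 * δ ^ 2
      ≤ (δ * (S f₁ g₁ z * S f₂ g₂ z)) * (δ * (S f₁ g₁ z * S f₃ g₃ z)) := by
        have := mul_le_mul_of_nonneg_left u₂₃ (by positivity : 0 ≤ S f₁ g₁ z ^ 2 * δ ^ 2)
        nlinarith
    _ ≤ (2 * ‖W₁₂ z‖) * (2 * ‖W₁₃ z‖) := mul_le_mul (k₁₂ z) (k₁₃ z) (by positivity) (by positivity)
    _ = 4 * (‖W₁₂ z‖ * ‖W₁₃ z‖) := by ring

/-- If `a, b, c` are meromorphic on all of `ℂ` (or `≡ ∞`) and the product of their mutual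
spherical distances is bounded below by some `ε > 0`, then all three are constant. -/
theorem stmt_0 (a b c : ℂ → OnePoint ℂ)
    (ha : MeromorphicOnSph Set.univ a) (hb : MeromorphicOnSph Set.univ b)
    (hc : MeromorphicOnSph Set.univ c)
    (ε : ℝ) (hε : 0 < ε)
    (hsep : ∀ z : ℂ, ε ≤ sphDist (a z) (b z) * sphDist (a z) (c z) * sphDist (b z) (c z)) :
    (∀ z w : ℂ, a z = a w) ∧ (∀ z w : ℂ, b z = b w) ∧ (∀ z w : ℂ, c z = c w) := by
  have hδ : 0 < 2 * ε / π ^ 3 := by have := pi_pos; positivity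
  have hab z : 2 * ε / π ^ 3 ≤ chordal (a z) (b z) := chordal_lower_of_sphDist_mul (hsep z)
  have hac z : 2 * ε / π ^ 3 ≤ chordal (a z) (c z) :=
    chordal_lower_of_sphDist_mul (w := b z) <| (hsep z).trans_eq <| by
      rw [sphDist_comm (b z) (c z)]; ring
  have hbc z : 2 * ε / π ^ 3 ≤ chordal (b z) (c z) :=
    chordal_lower_of_sphDist_mul (w := a z) <| (hsep z).trans_eq <| by
      rw [sphDist_comm (a z) (b z), sphDist_comm (a z) (c z)]; ring
  have hba z := (hab z).trans_eq (chordal_comm _ _)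
  have hca z := (hac z).trans_eq (chordal_comm _ _)
  have hcb z := (hbc z).trans_eq (chordal_comm _ _)
  exact ⟨apply_eq_apply_of_le_chordal ha hb hc hδ hab hac hbc,
    apply_eq_apply_of_le_chordal hb ha hc hδ hba hbc hac,
    apply_eq_apply_of_le_chordal hc ha hb hδ hca hcb hab⟩
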